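/- arXiv:2510.21951 — 2 statements merged into one kernel-verified Lean document; each statement's English description precedes it below -/
import Mathlib

section
/- The function F ↦ (1-F)·W(e^{p+qF-(C+1)}) is Lipschitz continuous on [0,1], with Lipschitz constant at most W(e^{p+q-(C+1)})·(q/(1+W(e^{p-(C+1)})) + 1). -/
/-! Write `w F = W (exp (p + q F - (C + 1)))`. Taking logarithms in `W z * exp (W z) = z` gives
`log (W z) + W z = log z`, and together with `log v - log u ≥ 1 - u / v` this yields the
increment bound `W b - W a ≤ W b / (1 + W b) * (log b - log a)`, a discrete form of
`(W ∘ exp)' = W / (1 + W)`. In particular `W` is increasing, so on `[0, 1]` the function `w` lies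
between `W (exp (p - (C + 1)))` and `W (exp (p + q - (C + 1)))`; hence `w` is bounded by the
latter and Lipschitz with constant `q W (exp (p + q - (C + 1))) / (1 + W (exp (p - (C + 1))))`.
The product rule for Lipschitz constants applied to `(1 - F) * w F` adds the two. -/

open Real Set

/-- `W` inverts `w ↦ w * exp w` on `[0, ∞)`, as the principal branch of Lambert's function does. -/
def IsLambertW (W : ℝ → ℝ) : Prop :=
  ∀ z : ℝ, 0 ≤ z → 0 ≤ W z ∧ W z * exp (W z) = z

namespace IsLambertW

variable {W : ℝ → ℝ}

theorem pos (hW : IsLambertW W) {z : ℝ} (hz : 0 < z) : 0 < W z := by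
  refine (hW z hz.le).1.lt_of_ne fun h ↦ hz.ne ?_
  simpa [← h] using (hW z hz.le).2

theorem log_add (hW : IsLambertW W) {z : ℝ} (hz : 0 < z) : log (W z) + W z = log z := by
  conv_rhs => rw [← (hW z hz.le).2]
  rw [log_mul (hW.pos hz).ne' (exp_pos _).ne', log_exp]

theorem sub_le_mul_log_sub (hW : IsLambertW W) {a b : ℝ} (ha : 0 < a) (hb : 0 < b) :
    W b - W a ≤ W b / (1 + W b) * (log b - log a) := by
  have hu := hW.pos ha
  have hv := hW.pos hb
  have hlog : 1 - W a / W b ≤ log (W b) - log (W a) := by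
    simpa [log_div hv.ne' hu.ne'] using one_sub_inv_le_log_of_pos (div_pos hv hu)
  have hincr : (W b - W a) * (1 + W b) / W b ≤ log b - log a := by
    rw [← hW.log_add ha, ← hW.log_add hb]
    calc (W b - W a) * (1 + W b) / W b = 1 - W a / W b + (W b - W a) := by field_simp
      _ ≤ _ := by linarith
  calc W b - W a = W b / (1 + W b) * ((W b - W a) * (1 + W b) / W b) := by field_simp
    _ ≤ W b / (1 + W b) * (log b - log a) := by gcongr

theorem monotoneOn (hW : IsLambertW W) : MonotoneOn W (Ioi 0) := by
  intro a ha b hb hab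
  have := hW.sub_le_mul_log_sub hb ha
  have : 0 ≤ W a / (1 + W a) := div_nonneg (hW.pos ha).le (by linarith [hW.pos ha])
  nlinarith [log_le_log ha hab]

theorem comp_exp_mem_Icc (hW : IsLambertW W) {p q c x : ℝ} (hq : 0 ≤ q) (hx : x ∈ Icc 0 1) :
    W (exp (p + q * x - c)) ∈ Icc (W (exp (p - c))) (W (exp (p + q - c))) := by
  constructor <;> refine hW.monotoneOn (exp_pos _) (exp_pos _) (exp_le_exp.2 ?_) <;>
    nlinarith [hx.1, hx.2]

theorem lipschitzOnWith_comp_exp (hW : IsLambertW W) {p q c : ℝ} (hq : 0 ≤ q) :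
    LipschitzOnWith (W (exp (p + q - c)) * (q / (1 + W (exp (p - c))))).toNNReal
      (fun x ↦ W (exp (p + q * x - c))) (Icc 0 1) := by
  set w : ℝ → ℝ := fun x ↦ W (exp (p + q * x - c))
  refine LipschitzOnWith.of_le_add_mul' _ fun x hx y hy ↦ ?_
  obtain ⟨hmin, hmax⟩ := hW.comp_exp_mem_Icc (p := p) (c := c) hq hx
  have hmin_pos := hW.pos (exp_pos (p - c))
  have hmax_pos := hmin_pos.trans_le (hmin.trans hmax)
  have hwx_pos : 0 < w x := hmin_pos.trans_le hmin
  have hslope : w x / (1 + w x) * q ≤ W (exp (p + q - c)) * (q / (1 + W (exp (p - c)))) := by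
    rw [div_mul_eq_mul_div, mul_div_assoc']
    gcongr
  have hincr : w x - w y ≤ w x / (1 + w x) * q * (x - y) := by
    have := hW.sub_le_mul_log_sub (exp_pos (p + q * y - c)) (exp_pos (p + q * x - c))
    rw [log_exp, log_exp, show p + q * x - c - (p + q * y - c) = q * (x - y) by ring] at this
    linarith
  have habs := mul_le_mul_of_nonneg_left (le_abs_self (x - y))
    (by positivity : 0 ≤ w x / (1 + w x) * q)
  rw [Real.dist_eq]
  linarith [mul_le_mul_of_nonneg_right hslope (abs_nonneg (x - y))]

end IsLambertW

open scoped NNReal in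
theorem lipschitzOnWith_one_sub_mul {g : ℝ → ℝ} {L M : ℝ≥0}
    (hg : LipschitzOnWith L g (Icc 0 1)) (hM : ∀ x ∈ Icc (0 : ℝ) 1, |g x| ≤ M) :
    LipschitzOnWith (L + M) (fun x ↦ (1 - x) * g x) (Icc 0 1) := by
  refine LipschitzOnWith.of_dist_le_mul fun x hx y hy ↦ ?_
  have hgxy := hg.dist_le_mul x hx y hy
  rw [Real.dist_eq] at *
  have h1x : |1 - x| ≤ 1 := abs_le.2 ⟨by linarith [hx.2], by linarith [hx.1]⟩
  calc |(1 - x) * g x - (1 - y) * g y| = |(1 - x) * (g x - g y) + (y - x) * g y| := by ring_nf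
    _ ≤ |1 - x| * |g x - g y| + |y - x| * |g y| := by
      rw [← abs_mul, ← abs_mul]; exact abs_add_le _ _
    _ ≤ 1 * (L * |x - y|) + |x - y| * M := by
      rw [abs_sub_comm y x]; gcongr
      exacts [hgxy, hM y hy]
    _ = (L + M) * |x - y| := by ring

theorem stmt_11_general (C p q : ℝ) (hq : 0 ≤ q)
    (W : ℝ → ℝ) (hW : ∀ z : ℝ, 0 ≤ z → 0 ≤ W z ∧ W z * Real.exp (W z) = z) :
    LipschitzOnWith
      (Real.toNNReal
        (W (Real.exp (p + q - (C + 1))) *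
          (q / (1 + W (Real.exp (p - (C + 1)))) + 1)))
      (fun F : ℝ => (1 - F) * W (Real.exp (p + q * F - (C + 1))))
      (Set.Icc (0:ℝ) 1) := by
  have hW : IsLambertW W := hW
  have hmax_pos := hW.pos (exp_pos (p + q - (C + 1)))
  have hmin_pos := hW.pos (exp_pos (p - (C + 1)))
  have hbound : ∀ x ∈ Icc (0 : ℝ) 1,
      |W (exp (p + q * x - (C + 1)))| ≤ (W (exp (p + q - (C + 1)))).toNNReal := fun x hx ↦ by
    obtain ⟨hmin, hmax⟩ := hW.comp_exp_mem_Icc hq hx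
    rw [abs_of_pos (hmin_pos.trans_le hmin)]
    exact hmax.trans (le_coe_toNNReal _)
  convert lipschitzOnWith_one_sub_mul (hW.lipschitzOnWith_comp_exp hq) hbound using 1
  rw [← toNNReal_add (by positivity) hmax_pos.le, mul_add_one]

/-- `F ↦ (1-F)·W(e^{p+qF-(C+1)})` is Lipschitz on `[0,1]` with constant at most
`W(e^{p+q-(C+1)})·(q/(1+W(e^{p-(C+1)})) + 1)`. -/
theorem stmt_11 (C p q : ℝ) (hC : 0 ≤ C) (hq : 0 ≤ q)
    (W : ℝ → ℝ) (hW : ∀ z : ℝ, 0 ≤ z → 0 ≤ W z ∧ W z * Real.exp (W z) = z) :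
    LipschitzOnWith
      (Real.toNNReal
        (W (Real.exp (p + q - (C + 1))) *
          (q / (1 + W (Real.exp (p - (C + 1)))) + 1)))
      (fun F : ℝ => (1 - F) * W (Real.exp (p + q * F - (C + 1))))
      (Set.Icc (0:ℝ) 1) :=
  stmt_11_general C p q hq W hW
end

section
/- In the single-period Stackelberg game, for any rebate r ≥ 0 the firm's best-response price is π*(r) = C + 1 + W(e^{p+qF_0+r-(C+1)}), and its derivative satisfies dπ*/dr = W/(1+W) ∈ (0,1), where W = W(e^{p+qF_0+r-(C+1)}). Consequently π*(r) - r is strictly decreasing in r. -/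
/-!
Write `w = W(e^{a-(C+1)})` with `a = p + qF₀ + r`, so that `w e^w = e^{a-(C+1)}`. With
`u = e^{a-π}` and `s = w - (π - C - 1)` one has `u = w e^s` and `π - C = 1 + w - s`, hence
`(π - C) u = w ((1 - s) e^s + u) ≤ w (1 + u)` by `1 - s ≤ e^{-s}`: the profit never exceeds
`(1 - F₀) w`, which is its value at `π = C + 1 + w`.

For the derivative, `t ↦ W(e^t)` equals `exp ∘ ψ`, where `ψ` is the inverse of the increasing
bijection `x ↦ e^x + x` of `ℝ` (indeed `W(e^t) = e^x` iff `x + e^x = t`), and the inverse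
function theorem gives `ψ' = 1/(e^ψ + 1)`, so `(W ∘ exp)' = W/(1 + W) ∈ (0, 1)`.
-/

section

open Real Set

noncomputable def expAddSelfOrderIso : ℝ ≃o ℝ :=
  StrictMono.orderIsoOfSurjective (fun x => exp x + x)
    (exp_strictMono.add strictMono_id)
    ((continuous_exp.add continuous_id).surjective
      (tendsto_exp_atTop.atTop_add_atTop Filter.tendsto_id)
      (tendsto_exp_atBot.add_atBot Filter.tendsto_id))

/-- `logLambertWExp t = log W(e^t)`. -/
noncomputable def logLambertWExp : ℝ → ℝ := expAddSelfOrderIso.symm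

lemma exp_logLambertWExp_add (t : ℝ) : exp (logLambertWExp t) + logLambertWExp t = t :=
  expAddSelfOrderIso.apply_symm_apply t

lemma hasDerivAt_logLambertWExp (t : ℝ) :
    HasDerivAt logLambertWExp (exp (logLambertWExp t) + 1)⁻¹ t :=
  ((hasDerivAt_exp _).add (hasDerivAt_id _)).of_local_left_inverse
    expAddSelfOrderIso.symm.toHomeomorph.continuous.continuousAt
    (by positivity) (Filter.Eventually.of_forall exp_logLambertWExp_add)

lemma strictMonoOn_mul_exp : StrictMonoOn (fun x => x * exp x) (Ici 0) :=
  fun _ hx _ _ hxy =>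
    mul_lt_mul hxy (exp_strictMono hxy).le (exp_pos _) ((mem_Ici.1 hx).trans hxy.le)

lemma one_sub_mul_exp_le_one (s : ℝ) : (1 - s) * exp s ≤ 1 := by
  calc (1 - s) * exp s ≤ exp (-s) * exp s :=
        mul_le_mul_of_nonneg_right (one_sub_le_exp_neg s) (exp_pos s).le
    _ = 1 := by rw [← exp_add, neg_add_cancel, exp_zero]

lemma div_one_add_mem_Ioo {w : ℝ} (hw : 0 < w) : w / (1 + w) ∈ Ioo 0 1 :=
  ⟨by positivity, (div_lt_one (by positivity)).2 (lt_one_add w)⟩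

theorem isMaxOn_logit_profit {a C κ w : ℝ} (hκ : 0 ≤ κ) (hw : w * exp w = exp (a - (C + 1))) :
    IsMaxOn (fun x => (x - C) * κ * (exp (a - x) / (1 + exp (a - x)))) univ (C + 1 + w) := by
  have hw_pos : 0 < w := pos_of_mul_pos_left (hw ▸ exp_pos _) (exp_pos w).le
  have exp_at (x : ℝ) : exp (a - x) = w * exp (w - (x - (C + 1))) := by
    rw [show a - x = a - (C + 1) + (w - (x - (C + 1))) - w by ring, exp_sub, exp_add, ← hw]
    field_simp
  have value_at_max : exp (a - (C + 1 + w)) = w := by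
    rw [exp_at]; simp
  intro x _
  set u := exp (a - x)
  have hu : 0 < 1 + u := by positivity
  have revenue_le : (x - C) * u ≤ w * (1 + u) :=
    calc (x - C) * u
        = w * ((1 - (w - (x - (C + 1)))) * exp (w - (x - (C + 1)))) + w * u := by
          rw [show u = _ from exp_at x]; ring
      _ ≤ w * 1 + w * u := by gcongr; exact one_sub_mul_exp_le_one _
      _ = w * (1 + u) := by ring
  show (x - C) * κ * (u / (1 + u)) ≤ _
  calc (x - C) * κ * (u / (1 + u)) = κ * ((x - C) * u / (1 + u)) := by ring
    _ ≤ κ * w := mul_le_mul_of_nonneg_left ((div_le_iff₀ hu).2 revenue_le) hκ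
    _ = _ := by dsimp only; rw [value_at_max]; field_simp; ring

section LambertW

variable {W : ℝ → ℝ} (hW : ∀ z : ℝ, 0 ≤ z → 0 ≤ W z ∧ W z * exp (W z) = z)
include hW

lemma lambertW_exp_eq (t : ℝ) : W (exp t) = exp (logLambertWExp t) := by
  obtain ⟨hW_nonneg, hW_eq⟩ := hW (exp t) (exp_pos t).le
  refine strictMonoOn_mul_exp.injOn hW_nonneg (exp_pos _).le (hW_eq.trans ?_)
  rw [← exp_add, add_comm, exp_logLambertWExp_add]

lemma lambertW_exp_pos (t : ℝ) : 0 < W (exp t) :=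
  lambertW_exp_eq hW t ▸ exp_pos _

lemma hasDerivAt_lambertW_exp (t : ℝ) :
    HasDerivAt (fun s => W (exp s)) (W (exp t) / (1 + W (exp t))) t := by
  simp only [lambertW_exp_eq hW]
  convert (hasDerivAt_logLambertWExp t).exp using 1
  rw [div_eq_mul_inv, add_comm]

end LambertW

end

theorem stmt_15_general (C p q F₀ : ℝ)
    (hF₀ : F₀ ∈ Set.Ico (0:ℝ) 1)
    (W : ℝ → ℝ) (hW : ∀ z : ℝ, 0 ≤ z → 0 ≤ W z ∧ W z * Real.exp (W z) = z) :
    (∀ r : ℝ, 0 ≤ r →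
      IsMaxOn
        (fun π : ℝ => (π - C) * (1 - F₀) *
          (Real.exp (p + q * F₀ + r - π) / (1 + Real.exp (p + q * F₀ + r - π))))
        Set.univ (C + 1 + W (Real.exp (p + q * F₀ + r - (C + 1)))) ∧
      HasDerivAt (fun s : ℝ => C + 1 + W (Real.exp (p + q * F₀ + s - (C + 1))))
        (W (Real.exp (p + q * F₀ + r - (C + 1))) /
          (1 + W (Real.exp (p + q * F₀ + r - (C + 1))))) r ∧
      W (Real.exp (p + q * F₀ + r - (C + 1))) /
          (1 + W (Real.exp (p + q * F₀ + r - (C + 1)))) ∈ Set.Ioo (0:ℝ) 1) ∧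
    StrictAntiOn
      (fun r : ℝ => C + 1 + W (Real.exp (p + q * F₀ + r - (C + 1))) - r)
      (Set.Ici (0:ℝ)) := by
  set t : ℝ → ℝ := fun r => p + q * F₀ + r - (C + 1)
  have hasDerivAt_best_response (r : ℝ) : HasDerivAt (fun s => C + 1 + W (Real.exp (t s)))
      (W (Real.exp (t r)) / (1 + W (Real.exp (t r)))) r := by
    have ht : HasDerivAt t 1 r := ((hasDerivAt_id r).const_add _).sub_const _
    simpa using ((hasDerivAt_lambertW_exp hW (t r)).comp r ht).const_add (C + 1)
  have slope_mem (r : ℝ) := div_one_add_mem_Ioo (lambertW_exp_pos hW (t r))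
  refine ⟨fun r _ => ⟨?_, hasDerivAt_best_response r, slope_mem r⟩, ?_⟩
  · exact isMaxOn_logit_profit (sub_nonneg.2 hF₀.2.le) (hW _ (Real.exp_pos _).le).2
  · exact (strictAnti_of_hasDerivAt_neg (fun r => (hasDerivAt_best_response r).sub
      (hasDerivAt_id r)) fun r => sub_neg.2 (slope_mem r).2).strictAntiOn _

/-- Single-period Stackelberg game: for every rebate `r ≥ 0`, the firm's best response
is `π*(r) = C+1+W(e^{p+qF₀+r-(C+1)})`, with `dπ*/dr = W/(1+W) ∈ (0,1)`; consequently
`π*(r) - r` is strictly decreasing in `r` on `[0,∞)`. -/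
theorem stmt_15 (C p q F₀ : ℝ) (hC : 0 ≤ C) (hp : 0 ≤ p) (hq : 0 ≤ q)
    (hF₀ : F₀ ∈ Set.Ico (0:ℝ) 1)
    (W : ℝ → ℝ) (hW : ∀ z : ℝ, 0 ≤ z → 0 ≤ W z ∧ W z * Real.exp (W z) = z) :
    (∀ r : ℝ, 0 ≤ r →
      IsMaxOn
        (fun π : ℝ => (π - C) * (1 - F₀) *
          (Real.exp (p + q * F₀ + r - π) / (1 + Real.exp (p + q * F₀ + r - π))))
        Set.univ (C + 1 + W (Real.exp (p + q * F₀ + r - (C + 1)))) ∧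
      HasDerivAt (fun s : ℝ => C + 1 + W (Real.exp (p + q * F₀ + s - (C + 1))))
        (W (Real.exp (p + q * F₀ + r - (C + 1))) /
          (1 + W (Real.exp (p + q * F₀ + r - (C + 1))))) r ∧
      W (Real.exp (p + q * F₀ + r - (C + 1))) /
          (1 + W (Real.exp (p + q * F₀ + r - (C + 1)))) ∈ Set.Ioo (0:ℝ) 1) ∧
    StrictAntiOn
      (fun r : ℝ => C + 1 + W (Real.exp (p + q * F₀ + r - (C + 1))) - r)
      (Set.Ici (0:ℝ)) :=
  stmt_15_general C p q F₀ hF₀ W hW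
end
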